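/- arXiv:2108.11624 — 2 statements merged into one kernel-verified Lean document; each statement's English description precedes it below -/
import Mathlib

section
/- Let $\Gamma$ be a finite rooted tree with root $a$, and let $\{U_t\}_{t\in\Gamma}$ be measurable subsets of a bounded domain $\Omega\subset\mathbb{R}^n$ and $\{B_t\}_{t\in\Gamma^*}$ pairwise disjoint sets of positive measure with $B_t\subset U_t\cap U_{t_p}$ (where $t_p$ is the parent of $t$). Let $\{\phi_t\}_{t\in\Gamma}$ be a measurable partition of unity with $\mathrm{supp}(\phi_t)\subset U_t$, $0\le\phi_t\le 1$, $\sum_t\phi_t=1$ on $\Omega$. Given $g\in L^1(\Omega)$ with $\int_\Omega g = 0$, set $f_t=g\phi_t$, $W_s=\bigcup_{k\succeq s}U_k$, $h_s = \frac{\chi_{B_s}}{|B_s|}\int_{W_s}\sum_{k\succeq s}f_k$ for $s\ne a$, and define $g_t = f_t + \sum_{s: s_p=t} h_s - h_t$ for $t\ne a$ and $g_a = f_a + \sum_{s:s_p=a}h_s$. Then: (1) $\sum_{t\in\Gamma} g_t = g$; (2) $\mathrm{supp}(g_t)\subset U_t$ for every $t$; (3) $\int_\Omega g_t = 0$ for every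 $t\in\Gamma$. -/
open MeasureTheory Finset
open scoped Classical

noncomputable section

/-- `s ⪯ t` in the rooted tree with parent map `par`: `s` lies on the path from the root to `t`. -/
def treeLe {Γ : Type*} (par : Γ → Γ) (s t : Γ) : Prop := ∃ m : ℕ, par^[m] t = s

/-- The shadow `W_s = ⋃_{k ⪰ s} U_k`. -/
def Wset {n : ℕ} {Γ : Type*} (par : Γ → Γ) (U : Γ → Set (EuclideanSpace ℝ (Fin n)))
    (s : Γ) : Set (EuclideanSpace ℝ (Fin n)) :=
  ⋃ k ∈ {k | treeLe par s k}, U k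

/-- `h_s = (χ_{B_s}/|B_s|) ∫_{W_s} ∑_{k ⪰ s} f_k`, where `f_k = g·φ_k`. -/
def hfun {n : ℕ} {Γ : Type*} [Fintype Γ] (par : Γ → Γ)
    (U B : Γ → Set (EuclideanSpace ℝ (Fin n)))
    (g : EuclideanSpace ℝ (Fin n) → ℝ) (φ : Γ → EuclideanSpace ℝ (Fin n) → ℝ)
    (s : Γ) (x : EuclideanSpace ℝ (Fin n)) : ℝ :=
  (B s).indicator
    (fun _ => (volume (B s)).toReal⁻¹ *
      ∫ y in Wset par U s,
        ∑ k ∈ Finset.univ.filter (fun k => treeLe par s k), g y * φ k y) x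

/-- The pieces `g_t` of the `𝒞`-orthogonal decomposition. -/
def gdec {n : ℕ} {Γ : Type*} [Fintype Γ] (a : Γ) (par : Γ → Γ)
    (U B : Γ → Set (EuclideanSpace ℝ (Fin n)))
    (g : EuclideanSpace ℝ (Fin n) → ℝ) (φ : Γ → EuclideanSpace ℝ (Fin n) → ℝ)
    (t : Γ) (x : EuclideanSpace ℝ (Fin n)) : ℝ :=
  if t = a then
    g x * φ t x +
      ∑ s ∈ Finset.univ.filter (fun s => par s = t ∧ s ≠ a), hfun par U B g φ s x
  else
    g x * φ t x +
      (∑ s ∈ Finset.univ.filter (fun s => par s = t ∧ s ≠ a), hfun par U B g φ s x) -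
      hfun par U B g φ t x

/-!
Properties (1) and (2) are pointwise: in `∑ t, g_t` every `h_s` (`s ≠ a`) occurs once with each
sign, and `h_s` is supported in `B_s ⊆ U_s ∩ U_{s_p}`. For (3), `∫ h_s = I_s := ∑_{k ⪰ s} ∫ f_k`
because `∑_{k ⪰ s} f_k` vanishes off `W_s ⊆ Ω`. The shadow of `t` is `t` together with the
disjoint shadows of its children, so `∫ f_t + ∑_{s_p = t} I_s = I_t`, which gives `∫ g_t = 0`
for `t ≠ a` and `∫ g_a = I_a = ∫ g = 0`.
-/

section Tree

variable {Γ : Type*} {par : Γ → Γ} {a : Γ}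

lemma treeLe_refl (s : Γ) : treeLe par s s := ⟨0, rfl⟩

lemma treeLe_of_parent_eq {s t k : Γ} (hs : par s = t) (hk : treeLe par s k) :
    treeLe par t k := by
  obtain ⟨m, hm⟩ := hk
  exact ⟨m + 1, by rw [Function.iterate_succ_apply', hm, hs]⟩

lemma eq_root_of_isPeriodicPt (hroot : par a = a) (hreach : ∀ t, ∃ m : ℕ, par^[m] t = a)
    {t : Γ} {d : ℕ} (hd : 0 < d) (ht : Function.IsPeriodicPt par d t) : t = a := by
  obtain ⟨m, hm⟩ := hreach t
  obtain ⟨j, hj⟩ := Nat.exists_eq_add_of_le' (Nat.le_mul_of_pos_left m hd)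
  calc t = par^[d * m] t := (ht.mul_const m).eq.symm
    _ = par^[j] (par^[m] t) := by rw [hj, Function.iterate_add_apply]
    _ = a := by rw [hm, Function.iterate_fixed hroot]

lemma not_treeLe_of_parent_eq (hroot : par a = a) (hreach : ∀ t, ∃ m : ℕ, par^[m] t = a)
    {s t : Γ} (hs : par s = t) (hsa : s ≠ a) : ¬ treeLe par s t := by
  rintro ⟨m, hm⟩
  refine hsa (eq_root_of_isPeriodicPt hroot hreach m.succ_pos ?_)
  change par^[m + 1] s = s
  rw [Function.iterate_succ_apply, hs, hm]

lemma eq_of_treeLe_of_parent_eq (hroot : par a = a) (hreach : ∀ t, ∃ m : ℕ, par^[m] t = a)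
    {s s' t k : Γ} (hs : par s = t) (hs' : par s' = t) (hsa : s ≠ a) (hs'a : s' ≠ a)
    (hk : treeLe par s k) (hk' : treeLe par s' k) : s = s' := by
  obtain ⟨m, hm⟩ := hk
  obtain ⟨m', hm'⟩ := hk'
  wlog hmm : m ≤ m' generalizing s s' m m'
  · exact (this hs' hs hs'a hsa m' hm' m hm (le_of_not_ge hmm)).symm
  obtain ⟨d, rfl⟩ := Nat.exists_eq_add_of_le hmm
  rw [add_comm, Function.iterate_add_apply, hm] at hm'
  cases d with
  | zero => exact hm'
  | succ e =>
    rw [Function.iterate_succ_apply, hs] at hm'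
    -- `t` lies on a cycle through `s'`, so it is the root, and then so is `s'`.
    have hta : t = a := eq_root_of_isPeriodicPt hroot hreach e.succ_pos <| by
      change par^[e + 1] t = t
      rw [Function.iterate_succ_apply', hm', hs']
    exact absurd (by rw [← hm', hta, Function.iterate_fixed hroot]) hs'a

lemma exists_child_treeLe (hroot : par a = a) {t k : Γ} (hk : treeLe par t k) (hkt : k ≠ t) :
    ∃ s, par s = t ∧ s ≠ a ∧ treeLe par s k := by
  have hk' : ∃ m, par^[m] k = t := hk
  set m := Nat.find hk'
  have hm : par^[m] k = t := Nat.find_spec hk'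
  obtain ⟨j, hj⟩ :=
    Nat.exists_eq_succ_of_ne_zero fun (h0 : m = 0) => hkt (by rw [h0] at hm; exact hm)
  have hpar : par (par^[j] k) = t := by rw [← Function.iterate_succ_apply' par j k, ← hj, hm]
  have hne : par^[j] k ≠ t := Nat.find_min hk' (show j < m by omega)
  refine ⟨par^[j] k, hpar, fun hja => hne ?_, j, rfl⟩
  rw [← hpar, hja, hroot]

variable [Fintype Γ]

variable (par) in
def treeShadow (t : Γ) : Finset Γ := univ.filter (fun k => treeLe par t k)

variable (par a) in
def treeChildren (t : Γ) : Finset Γ := univ.filter (fun s => par s = t ∧ s ≠ a)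

@[simp]
lemma mem_treeShadow {t k : Γ} : k ∈ treeShadow par t ↔ treeLe par t k := by
  simp [treeShadow]

@[simp]
lemma mem_treeChildren {t s : Γ} : s ∈ treeChildren par a t ↔ par s = t ∧ s ≠ a := by
  simp [treeChildren]

lemma treeShadow_eq_insert_biUnion_treeChildren (hroot : par a = a) (t : Γ) :
    treeShadow par t = insert t ((treeChildren par a t).biUnion (treeShadow par)) := by
  ext k
  simp only [mem_treeShadow, mem_insert, mem_biUnion, mem_treeChildren]
  constructor
  · intro hk
    by_cases hkt : k = t
    · exact Or.inl hkt
    · obtain ⟨s, hs, hsa, hsk⟩ := exists_child_treeLe hroot hk hkt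
      exact Or.inr ⟨s, ⟨hs, hsa⟩, hsk⟩
  · rintro (rfl | ⟨s, ⟨hs, -⟩, hsk⟩)
    · exact treeLe_refl k
    · exact treeLe_of_parent_eq hs hsk

lemma sum_treeShadow_eq_add_sum_treeChildren {M : Type*} [AddCommMonoid M] (hroot : par a = a)
    (hreach : ∀ t, ∃ m : ℕ, par^[m] t = a) (t : Γ) (F : Γ → M) :
    ∑ k ∈ treeShadow par t, F k =
      F t + ∑ s ∈ treeChildren par a t, ∑ k ∈ treeShadow par s, F k := by
  rw [treeShadow_eq_insert_biUnion_treeChildren hroot t, sum_insert, sum_biUnion]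
  · intro s hs s' hs' hne
    rw [mem_coe, mem_treeChildren] at hs hs'
    refine disjoint_left.2 fun k hk hk' => hne ?_
    rw [mem_treeShadow] at hk hk'
    exact eq_of_treeLe_of_parent_eq hroot hreach hs.1 hs'.1 hs.2 hs'.2 hk hk'
  · simp only [mem_biUnion, mem_treeChildren, mem_treeShadow, not_exists]
    rintro s ⟨⟨hs, hsa⟩, hst⟩
    exact not_treeLe_of_parent_eq hroot hreach hs hsa hst

lemma treeShadow_root (hreach : ∀ t, ∃ m : ℕ, par^[m] t = a) : treeShadow par a = univ :=
  eq_univ_of_forall fun k => mem_treeShadow.2 (hreach k)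

lemma sum_sum_treeChildren {M : Type*} [AddCommMonoid M] (F : Γ → M) :
    ∑ t, ∑ s ∈ treeChildren par a t, F s = ∑ s ∈ univ.filter (· ≠ a), F s := by
  rw [← sum_fiberwise (univ.filter (· ≠ a)) par F]
  refine sum_congr rfl fun t _ => sum_congr ?_ fun _ _ => rfl
  ext s
  simp only [mem_treeChildren, mem_filter, mem_univ, true_and, and_comm]

end Tree

lemma setIntegral_indicator_inv_measure_mul {X : Type*} [MeasurableSpace X] {μ : Measure X}
    {Ω B : Set X} (hB : MeasurableSet B) (hBΩ : B ⊆ Ω) (h0 : μ B ≠ 0) (htop : μ B ≠ ⊤)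
    (c : ℝ) : ∫ x in Ω, B.indicator (fun _ => (μ B).toReal⁻¹ * c) x ∂μ = c := by
  rw [setIntegral_indicator hB, Set.inter_eq_self_of_subset_right hBΩ, setIntegral_const,
    measureReal_def, smul_eq_mul, ← mul_assoc,
    mul_inv_cancel₀ (ENNReal.toReal_ne_zero.2 ⟨h0, htop⟩), one_mul]

lemma sum_setIntegral_mul_eq_of_sum_eq_one {X ι : Type*} [MeasurableSpace X] [Fintype ι]
    {μ : Measure X} {Ω : Set X} (hΩ : MeasurableSet Ω) {g : X → ℝ} {φ : ι → X → ℝ}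
    (hint : ∀ k, IntegrableOn (fun x => g x * φ k x) Ω μ) (hφ : ∀ x ∈ Ω, ∑ k, φ k x = 1) :
    ∑ k, ∫ x in Ω, g x * φ k x ∂μ = ∫ x in Ω, g x ∂μ := by
  rw [← integral_finsetSum _ fun k _ => hint k]
  exact setIntegral_congr_fun hΩ fun x hx => by simp only [← mul_sum, hφ x hx, mul_one]

section Decomposition

variable {n : ℕ} {Γ : Type*} [Fintype Γ] {a : Γ} {par : Γ → Γ}
  {U B : Γ → Set (EuclideanSpace ℝ (Fin n))} {g : EuclideanSpace ℝ (Fin n) → ℝ}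
  {φ : Γ → EuclideanSpace ℝ (Fin n) → ℝ}

lemma gdec_eq (t : Γ) (x : EuclideanSpace ℝ (Fin n)) :
    gdec a par U B g φ t x = g x * φ t x + ∑ s ∈ treeChildren par a t, hfun par U B g φ s x -
      if t ≠ a then hfun par U B g φ t x else 0 := by
  by_cases ht : t = a <;> simp [gdec, treeChildren, ht]

lemma sum_gdec_eq {x : EuclideanSpace ℝ (Fin n)} (hx : ∑ t, φ t x = 1) :
    ∑ t, gdec a par U B g φ t x = g x := by
  simp only [gdec_eq, sum_sub_distrib, sum_add_distrib, ← mul_sum, hx, sum_sum_treeChildren,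
    ← sum_filter]
  ring

lemma mem_of_gdec_ne_zero (hφsupp : ∀ t x, x ∉ U t → φ t x = 0)
    (hBsub : ∀ t, t ≠ a → B t ⊆ U t ∩ U (par t)) {t : Γ} {x : EuclideanSpace ℝ (Fin n)}
    (h : gdec a par U B g φ t x ≠ 0) : x ∈ U t := by
  by_contra hx
  refine h ?_
  have hchild : ∀ s ∈ treeChildren par a t, hfun par U B g φ s x = 0 := by
    intro s hs
    obtain ⟨rfl, hsa⟩ := mem_treeChildren.1 hs
    exact Set.indicator_of_notMem (fun hxB => hx (hBsub s hsa hxB).2) _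
  have hself : t ≠ a → hfun par U B g φ t x = 0 := fun hta =>
    Set.indicator_of_notMem (fun hxB => hx (hBsub t hta hxB).1) _
  rw [gdec_eq, hφsupp t x hx, sum_eq_zero hchild]
  split_ifs with hta <;> simp [hself, hta]

lemma setIntegral_Wset_sum_eq {μ : Measure (EuclideanSpace ℝ (Fin n))}
    {Ω : Set (EuclideanSpace ℝ (Fin n))} (hUΩ : ∀ t, U t ⊆ Ω)
    {F : Γ → EuclideanSpace ℝ (Fin n) → ℝ} (hF : ∀ k x, x ∉ U k → F k x = 0)
    (hint : ∀ k, IntegrableOn (F k) Ω μ) (s : Γ) :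
    ∫ y in Wset par U s, ∑ k ∈ treeShadow par s, F k y ∂μ =
      ∑ k ∈ treeShadow par s, ∫ y in Ω, F k y ∂μ := by
  have hW : ∀ y ∉ Wset par U s, ∑ k ∈ treeShadow par s, F k y = 0 := fun y hy =>
    sum_eq_zero fun k hk => hF k y fun hyk => hy (Set.mem_biUnion (mem_treeShadow.1 hk) hyk)
  have hΩ : ∀ y ∉ Ω, ∑ k ∈ treeShadow par s, F k y = 0 := fun y hy =>
    hW y fun hyW => hy (Set.iUnion₂_subset (fun k _ => hUΩ k) hyW)
  rw [setIntegral_eq_integral_of_forall_compl_eq_zero hW,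
    ← setIntegral_eq_integral_of_forall_compl_eq_zero hΩ,
    integral_finsetSum _ fun k _ => hint k]

lemma integrableOn_hfun {Ω : Set (EuclideanSpace ℝ (Fin n))} {s : Γ}
    (hBm : MeasurableSet (B s)) (htop : volume (B s) ≠ ⊤) : IntegrableOn (hfun par U B g φ s) Ω :=
  ((integrable_indicator_iff hBm).2 (integrableOn_const htop)).integrableOn

lemma setIntegral_hfun {Ω : Set (EuclideanSpace ℝ (Fin n))} (hUΩ : ∀ t, U t ⊆ Ω)
    (hφsupp : ∀ t x, x ∉ U t → φ t x = 0) (hint : ∀ k, IntegrableOn (fun x => g x * φ k x) Ω)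
    {s : Γ} (hBm : MeasurableSet (B s)) (hBΩ : B s ⊆ Ω) (h0 : volume (B s) ≠ 0)
    (htop : volume (B s) ≠ ⊤) :
    ∫ x in Ω, hfun par U B g φ s x = ∑ k ∈ treeShadow par s, ∫ x in Ω, g x * φ k x :=
  (setIntegral_indicator_inv_measure_mul hBm hBΩ h0 htop _).trans
    (setIntegral_Wset_sum_eq hUΩ (fun k x hx => by rw [hφsupp k x hx, mul_zero]) hint s)

lemma setIntegral_gdec {Ω : Set (EuclideanSpace ℝ (Fin n))}
    (hint : ∀ k, IntegrableOn (fun x => g x * φ k x) Ω)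
    (hhint : ∀ s, s ≠ a → IntegrableOn (hfun par U B g φ s) Ω) (t : Γ) :
    ∫ x in Ω, gdec a par U B g φ t x =
      (∫ x in Ω, g x * φ t x) + ∑ s ∈ treeChildren par a t, (∫ x in Ω, hfun par U B g φ s x) -
        if t ≠ a then ∫ x in Ω, hfun par U B g φ t x else 0 := by
  have hchild : ∀ s ∈ treeChildren par a t, IntegrableOn (hfun par U B g φ s) Ω :=
    fun s hs => hhint s (mem_treeChildren.1 hs).2
  have hsum := integrable_finsetSum _ hchild
  obtain rfl | ht := eq_or_ne t a
  · simp only [gdec_eq, ne_eq, not_true_eq_false, if_false, sub_zero]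
    rw [integral_add (hint t) hsum, integral_finsetSum _ hchild]
  · simp only [gdec_eq, ht, ne_eq, not_false_eq_true, if_true]
    rw [integral_sub ((hint t).fun_add hsum) (hhint t ht),
      integral_add (hint t) hsum, integral_finsetSum _ hchild]

lemma setIntegral_gdec_eq_zero (hroot : par a = a) (hreach : ∀ t, ∃ m : ℕ, par^[m] t = a)
    {Ω : Set (EuclideanSpace ℝ (Fin n))} (hΩm : MeasurableSet Ω)
    (hint : ∀ k, IntegrableOn (fun x => g x * φ k x) Ω)
    (hhint : ∀ s, s ≠ a → IntegrableOn (hfun par U B g φ s) Ω)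
    (hhval : ∀ s, s ≠ a →
      ∫ x in Ω, hfun par U B g φ s x = ∑ k ∈ treeShadow par s, ∫ x in Ω, g x * φ k x)
    (hφsum : ∀ x ∈ Ω, ∑ t, φ t x = 1) (hgmean : ∫ x in Ω, g x = 0) (t : Γ) :
    ∫ x in Ω, gdec a par U B g φ t x = 0 := by
  have htelescope : (∫ x in Ω, g x * φ t x) + ∑ s ∈ treeChildren par a t,
      ∑ k ∈ treeShadow par s, ∫ x in Ω, g x * φ k x =
        ∑ k ∈ treeShadow par t, ∫ x in Ω, g x * φ k x :=
    (sum_treeShadow_eq_add_sum_treeChildren hroot hreach t fun k => ∫ x in Ω, g x * φ k x).symm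
  rw [setIntegral_gdec hint hhint, sum_congr rfl fun s hs => hhval s (mem_treeChildren.1 hs).2,
    htelescope]
  by_cases ht : t = a
  · rw [if_neg (not_not.2 ht), sub_zero, ht, treeShadow_root hreach,
      sum_setIntegral_mul_eq_of_sum_eq_one hΩm hint hφsum, hgmean]
  · rw [if_pos ht, hhval t ht, sub_self]

end Decomposition

theorem stmt10_general {n : ℕ} {Γ : Type*} [Fintype Γ] (a : Γ) (par : Γ → Γ)
    (hroot : par a = a) (hreach : ∀ t, ∃ m : ℕ, par^[m] t = a)
    (Ω : Set (EuclideanSpace ℝ (Fin n)))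
    (hΩm : MeasurableSet Ω) (hΩb : Bornology.IsBounded Ω)
    (U B : Γ → Set (EuclideanSpace ℝ (Fin n)))
    (hBm : ∀ t, MeasurableSet (B t))
    (hUΩ : ∀ t, U t ⊆ Ω)
    (hBpos : ∀ t, t ≠ a → 0 < volume (B t))
    (hBsub : ∀ t, t ≠ a → B t ⊆ U t ∩ U (par t))
    (φ : Γ → EuclideanSpace ℝ (Fin n) → ℝ)
    (hφm : ∀ t, Measurable (φ t))
    (hφsupp : ∀ t x, x ∉ U t → φ t x = 0)
    (hφ0 : ∀ t x, 0 ≤ φ t x) (hφ1 : ∀ t x, φ t x ≤ 1)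
    (hφsum : ∀ x ∈ Ω, ∑ t, φ t x = 1)
    (g : EuclideanSpace ℝ (Fin n) → ℝ)
    (hgint : IntegrableOn g Ω)
    (hgmean : ∫ x in Ω, g x = 0) :
    (∀ x ∈ Ω, ∑ t, gdec a par U B g φ t x = g x) ∧
    (∀ t x, gdec a par U B g φ t x ≠ 0 → x ∈ U t) ∧
    (∀ t, ∫ x in Ω, gdec a par U B g φ t x = 0) := by
  have hBΩ : ∀ s, s ≠ a → B s ⊆ Ω := fun s hs =>
    (hBsub s hs).trans (Set.inter_subset_left.trans (hUΩ s))
  have hBfin : ∀ s, s ≠ a → volume (B s) ≠ ⊤ := fun s hs =>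
    ((measure_mono (hBΩ s hs)).trans_lt hΩb.measure_lt_top).ne
  have hint : ∀ k, IntegrableOn (fun x => g x * φ k x) Ω := fun k =>
    hgint.mul_bdd (hφm k).aestronglyMeasurable <| ae_of_all _ fun x => by
      rw [Real.norm_eq_abs, abs_le]
      exact ⟨by linarith [hφ0 k x], hφ1 k x⟩
  refine ⟨fun x hx => sum_gdec_eq (hφsum x hx), fun t x => mem_of_gdec_ne_zero hφsupp hBsub,
    setIntegral_gdec_eq_zero hroot hreach hΩm hint
      (fun s hs => integrableOn_hfun (hBm s) (hBfin s hs))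
      (fun s hs =>
        setIntegral_hfun hUΩ hφsupp hint (hBm s) (hBΩ s hs) (hBpos s hs).ne' (hBfin s hs))
      hφsum hgmean⟩

theorem stmt10 {n : ℕ} {Γ : Type*} [Fintype Γ] (a : Γ) (par : Γ → Γ)
    (hroot : par a = a) (hreach : ∀ t, ∃ m : ℕ, par^[m] t = a)
    (Ω : Set (EuclideanSpace ℝ (Fin n)))
    (hΩm : MeasurableSet Ω) (hΩb : Bornology.IsBounded Ω)
    (U B : Γ → Set (EuclideanSpace ℝ (Fin n)))
    (hUm : ∀ t, MeasurableSet (U t)) (hBm : ∀ t, MeasurableSet (B t))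
    (hUΩ : ∀ t, U t ⊆ Ω)
    (hBpos : ∀ t, t ≠ a → 0 < volume (B t))
    (hBdisj : ∀ s t, s ≠ a → t ≠ a → s ≠ t → Disjoint (B s) (B t))
    (hBsub : ∀ t, t ≠ a → B t ⊆ U t ∩ U (par t))
    (φ : Γ → EuclideanSpace ℝ (Fin n) → ℝ)
    (hφm : ∀ t, Measurable (φ t))
    (hφsupp : ∀ t x, x ∉ U t → φ t x = 0)
    (hφ0 : ∀ t x, 0 ≤ φ t x) (hφ1 : ∀ t x, φ t x ≤ 1)
    (hφsum : ∀ x ∈ Ω, ∑ t, φ t x = 1)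
    (g : EuclideanSpace ℝ (Fin n) → ℝ)
    (hgm : Measurable g) (hgint : IntegrableOn g Ω)
    (hgmean : ∫ x in Ω, g x = 0) :
    (∀ x ∈ Ω, ∑ t, gdec a par U B g φ t x = g x) ∧
    (∀ t x, gdec a par U B g φ t x ≠ 0 → x ∈ U t) ∧
    (∀ t, ∫ x in Ω, gdec a par U B g φ t x = 0) :=
  stmt10_general a par hroot hreach Ω hΩm hΩb U B hBm hUΩ hBpos hBsub φ hφm hφsupp hφ0 hφ1 hφsum g
    hgint hgmean
end
end

section
/- With the same Whitney-type decomposition of the Hölder-$\alpha$ graph domain $\Omega_\varphi$ as above, the number $\mathbb{W}_i(t)$ of cubes of edge $2^{-i}$ in the shadow of a cube $Q_t$ of edge $2^{-k}$ (i.e., among $\{r\succeq t\}$) satisfies $\mathbb{W}_i(t) \le C\, 2^{-k(n-1)}\,2^{-i(\alpha-n)}$ for $i\ge k$, with $C$ depending only on $n,\alpha,K$. -/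
open scoped Classical

noncomputable section

/-- The expanded Hölder graph domain `Ω_{φ,E}`. -/
def OmegaE (n : ℕ) (φ : (Fin (n - 1) → ℝ) → ℝ) : Set ((Fin (n - 1) → ℝ) × ℝ) :=
  {x | (∀ i, |x.1 i| < 3 / 2) ∧ 0 < x.2 ∧ x.2 < φ x.1}

/-- The tripled upward-translated cube `3(Q + ℓ eₙ)` of the cube with lower corner
`(c, y)` and edge `ℓ`. -/
def tripled (n : ℕ) (c : Fin (n - 1) → ℝ) (y ℓ : ℝ) : Set ((Fin (n - 1) → ℝ) × ℝ) :=
  {x | (∀ i, c i - ℓ < x.1 i ∧ x.1 i < c i + 2 * ℓ) ∧ y < x.2 ∧ x.2 < y + 3 * ℓ}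

/-- The Whitney-type tree decomposition of the Hölder graph domain
`Ω_φ = (-1/2,1/2)^{n-1} × (0,φ)`, built level by level from the root cube
`(-1/2,1/2)^{n-1} × (0,1)`: a cube either is translated upward unchanged (when the tripled
translated cube fits in the expanded domain `Ω_{φ,E}`) or is split into `2^{n-1}` children of
half the edge length.  Each vertex `t` carries a cube of edge `2^{-lvl t}` with base lower
corner `corner t` and bottom height `height t`. -/
structure WhitneyTree (n : ℕ) (φ : (Fin (n - 1) → ℝ) → ℝ) where
  Γ : Type
  countable : Countable Γ
  a : Γ
  par : Γ → Γ
  par_root : par a = a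
  reaches : ∀ t, ∃ m : ℕ, par^[m] t = a
  lvl : Γ → ℕ
  corner : Γ → Fin (n - 1) → ℝ
  height : Γ → ℝ
  lvl_root : lvl a = 0
  corner_root : ∀ i, corner a i = -(1 / 2)
  height_root : height a = 0
  child_translate : ∀ t, t ≠ a →
    tripled n (corner (par t)) (height (par t)) ((2 : ℝ) ^ (-(lvl (par t) : ℤ))) ⊆ OmegaE n φ →
    lvl t = lvl (par t) ∧ corner t = corner (par t) ∧
      height t = height (par t) + (2 : ℝ) ^ (-(lvl (par t) : ℤ))
  child_split : ∀ t, t ≠ a →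
    ¬ tripled n (corner (par t)) (height (par t)) ((2 : ℝ) ^ (-(lvl (par t) : ℤ))) ⊆ OmegaE n φ →
    lvl t = lvl (par t) + 1 ∧
      (∀ i, corner t i = corner (par t) i ∨
        corner t i = corner (par t) i + (2 : ℝ) ^ (-(lvl t : ℤ))) ∧
      height t = height (par t) + (2 : ℝ) ^ (-(lvl (par t) : ℤ))
  below_graph : ∀ t (x' : Fin (n - 1) → ℝ),
    (∀ i, corner t i ≤ x' i ∧ x' i ≤ corner t i + (2 : ℝ) ^ (-(lvl t : ℤ))) →
    height t + (2 : ℝ) ^ (-(lvl t : ℤ)) ≤ φ x'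
  cube_inj : ∀ s t, lvl s = lvl t → corner s = corner t → height s = height t → s = t


/-!
A cube of edge `2^{-i}` with `i ≥ 1` inherits its column from the last ancestor that was split,
and that ancestor was split because its tripled upward translate left `Ω_{φ,E}`: this gives a
point of the graph of `φ` within `4·2^{-i}` of the cube and less than `4·2^{-i}` above its
bottom. Since every cube lies below the graph, Hölder continuity bounds the difference of the
heights of two level-`i` cubes over the same column by `O(2^{-iα})`, so a column carries
`O(2^{i(1-α)})` of them. The level-`i` cubes in the shadow of `Q_t` sit over
`2^{(i-k)(n-1)}` dyadic columns of `Q_t`, and the bound is the product of the two counts.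
-/

theorem Nat.floor_div_eq_of_eq_mul {x e : ℝ} {m : ℕ} (he : e ≠ 0) (h : x = m * e) :
    ⌊x / e⌋₊ = m := by
  rw [h, mul_div_cancel_right₀ _ he, Nat.floor_natCast]

namespace Set

theorem finite_and_ncard_le_of_injOn_of_fibers {Γ A : Type*} {S : Set Γ} (f : Γ → A)
    (g : Γ → ℤ) (P : Finset A) (B : ℕ) (hinj : S.InjOn fun r => (f r, g r))
    (hf : ∀ r ∈ S, f r ∈ P) (hg : ∀ r ∈ S, ∀ r' ∈ S, f r = f r' → g r' ≤ g r + B) :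
    S.Finite ∧ S.ncard ≤ (2 * B + 1) * P.card := by
  have hfiber : ∀ p, {r ∈ S | f r = p}.Finite ∧ {r ∈ S | f r = p}.ncard ≤ 2 * B + 1 := by
    intro p
    rcases {r ∈ S | f r = p}.eq_empty_or_nonempty with h | ⟨r₀, hr₀S, hr₀p⟩
    · simp [h]
    have hmaps : MapsTo g {r ∈ S | f r = p} (Finset.Icc (g r₀ - B) (g r₀ + B) : Set ℤ) := by
      rintro r ⟨hrS, hrp⟩
      have := hg r hrS r₀ hr₀S (hrp.trans hr₀p.symm)
      have := hg r₀ hr₀S r hrS (hr₀p.trans hrp.symm)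
      simp only [Finset.coe_Icc, mem_Icc]
      omega
    have hginj : InjOn g {r ∈ S | f r = p} := fun r ⟨hrS, hrp⟩ r' ⟨hr'S, hr'p⟩ h =>
      hinj hrS hr'S (Prod.ext (hrp.trans hr'p.symm) h)
    refine ⟨Finite.of_injOn hmaps hginj (Finset.finite_toSet _), ?_⟩
    calc _ ≤ (Finset.Icc (g r₀ - B) (g r₀ + B) : Set ℤ).ncard :=
          ncard_le_ncard_of_injOn g hmaps hginj (Finset.finite_toSet _)
      _ = 2 * B + 1 := by rw [ncard_coe_finset, Int.card_Icc]; omega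
  have hcover : S ⊆ ⋃ p ∈ P, {r ∈ S | f r = p} := fun r hr =>
    mem_biUnion (hf r hr) ⟨hr, rfl⟩
  have hunion : (⋃ p ∈ P, {r ∈ S | f r = p}).Finite :=
    P.finite_toSet.biUnion fun p _ => (hfiber p).1
  refine ⟨hunion.subset hcover, ?_⟩
  calc S.ncard ≤ (⋃ p ∈ P, {r ∈ S | f r = p}).ncard := ncard_le_ncard hcover hunion
    _ ≤ ∑ p ∈ P, {r ∈ S | f r = p}.ncard := P.set_ncard_biUnion_le _
    _ ≤ ∑ _p ∈ P, (2 * B + 1) := Finset.sum_le_sum fun p _ => (hfiber p).2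
    _ = (2 * B + 1) * P.card := by rw [Finset.sum_const, smul_eq_mul, mul_comm]

end Set

@[elab_as_elim]
theorem treeLe_induction {Γ : Type*} {par : Γ → Γ} {a t : Γ} (hroot : par a = a)
    {P : Γ → Prop} (ht : P t) (hstep : ∀ r, r ≠ a → P (par r) → P r) {r : Γ}
    (hr : treeLe par t r) : P r := by
  obtain ⟨m, hm⟩ := hr
  induction m generalizing r with
  | zero => exact (show r = t from hm) ▸ ht
  | succ m ih =>
    by_cases hra : r = a
    · subst hra
      rwa [← Function.iterate_fixed hroot (m + 1), hm]
    · exact hstep r hra (ih (by rwa [Function.iterate_succ_apply] at hm))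

namespace WhitneyTree

variable {n : ℕ} {φ : (Fin (n - 1) → ℝ) → ℝ} (T : WhitneyTree n φ)

def edge (t : T.Γ) : ℝ := 2 ^ (-(T.lvl t : ℤ))

def Fits (t : T.Γ) : Prop := tripled n (T.corner t) (T.height t) (T.edge t) ⊆ OmegaE n φ

@[elab_as_elim]
theorem induction {P : T.Γ → Prop} (hroot : P T.a) (hstep : ∀ r, r ≠ T.a → P (T.par r) → P r)
    (r : T.Γ) : P r :=
  treeLe_induction T.par_root hroot hstep (T.reaches r)

variable {T}

theorem edge_pos (t : T.Γ) : 0 < T.edge t := zpow_pos two_pos _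

theorem edge_le_one (t : T.Γ) : T.edge t ≤ 1 :=
  zpow_le_one_of_nonpos₀ one_le_two (by omega)

theorem edge_root : T.edge T.a = 1 := by simp [edge, T.lvl_root]

theorem edge_eq_of_lvl_eq {s t : T.Γ} (h : T.lvl s = T.lvl t) : T.edge s = T.edge t := by
  rw [edge, edge, h]

theorem edge_eq_two_pow_mul {s t : T.Γ} (h : T.lvl s ≤ T.lvl t) :
    T.edge s = 2 ^ (T.lvl t - T.lvl s) * T.edge t := by
  rw [edge, edge, ← zpow_natCast, ← zpow_add₀ two_ne_zero]
  congr 1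
  push_cast [Nat.cast_sub h]
  ring

theorem edge_eq_rpow (t : T.Γ) : T.edge t = (2 : ℝ) ^ (-(T.lvl t : ℝ)) := by
  rw [edge, ← Real.rpow_intCast]
  norm_num

theorem lvl_par_le (t : T.Γ) : T.lvl (T.par t) ≤ T.lvl t := by
  by_cases ht : t = T.a
  · rw [ht, T.par_root]
  by_cases hfit : T.Fits (T.par t)
  · exact (T.child_translate t ht hfit).1.ge
  · exact (T.child_split t ht hfit).1 ▸ Nat.le_succ _

theorem edge_par_of_not_fits {t : T.Γ} (ht : t ≠ T.a) (hfit : ¬ T.Fits (T.par t)) :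
    T.edge (T.par t) = 2 * T.edge t := by
  rw [edge_eq_two_pow_mul (lvl_par_le t), (T.child_split t ht hfit).1]
  simp

theorem height_eq_of_ne_root {t : T.Γ} (ht : t ≠ T.a) :
    T.height t = T.height (T.par t) + T.edge (T.par t) := by
  by_cases hfit : T.Fits (T.par t)
  · exact (T.child_translate t ht hfit).2.2
  · exact (T.child_split t ht hfit).2.2

theorem exists_corner_eq_of_ne_root {t : T.Γ} (ht : t ≠ T.a) (j : Fin (n - 1)) :
    ∃ m : ℕ, T.corner t j = T.corner (T.par t) j + m * T.edge t ∧
      T.corner t j + T.edge t ≤ T.corner (T.par t) j + T.edge (T.par t) := by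
  by_cases hfit : T.Fits (T.par t)
  · obtain ⟨hl, hc, -⟩ := T.child_translate t ht hfit
    refine ⟨0, by simp [hc], ?_⟩
    simp [edge, hl, hc]
  · have hedge := edge_par_of_not_fits ht hfit
    have := edge_pos t
    rcases (T.child_split t ht hfit).2.1 j with h | h
    · exact ⟨0, by simp [h], by rw [h, hedge]; linarith⟩
    · exact ⟨1, by rw [h]; simp [edge], by rw [h, hedge]; simp only [edge] at *; linarith⟩

theorem exists_corner_eq_of_treeLe {t r : T.Γ} (h : treeLe T.par t r) :
    T.lvl t ≤ T.lvl r ∧ ∀ j, ∃ m : ℕ, T.corner r j = T.corner t j + m * T.edge r ∧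
      T.corner r j + T.edge r ≤ T.corner t j + T.edge t := by
  refine treeLe_induction T.par_root ⟨le_rfl, fun j => ⟨0, by simp, le_rfl⟩⟩ ?_ h
  rintro r hr ⟨hlvl, hcorner⟩
  refine ⟨hlvl.trans (lvl_par_le r), fun j => ?_⟩
  obtain ⟨m₁, hm₁, hle₁⟩ := hcorner j
  obtain ⟨m₂, hm₂, hle₂⟩ := exists_corner_eq_of_ne_root hr j
  refine ⟨m₁ * 2 ^ (T.lvl r - T.lvl (T.par r)) + m₂, ?_, hle₂.trans hle₁⟩
  rw [hm₂, hm₁, edge_eq_two_pow_mul (lvl_par_le r)]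
  push_cast
  ring

theorem exists_lt_two_pow_corner_eq {t r : T.Γ} (h : treeLe T.par t r) (j : Fin (n - 1)) :
    ∃ m : ℕ, m < 2 ^ (T.lvl r - T.lvl t) ∧ T.corner r j = T.corner t j + m * T.edge r := by
  obtain ⟨hlvl, hcorner⟩ := exists_corner_eq_of_treeLe h
  obtain ⟨m, hm, hle⟩ := hcorner j
  refine ⟨m, ?_, hm⟩
  rw [hm, edge_eq_two_pow_mul hlvl] at hle
  have : ((m + 1 : ℕ) : ℝ) * T.edge r ≤ ((2 ^ (T.lvl r - T.lvl t) : ℕ) : ℝ) * T.edge r := by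
    push_cast; linarith
  exact_mod_cast le_of_mul_le_mul_right this (edge_pos r)

theorem neg_half_le_corner (t : T.Γ) (j : Fin (n - 1)) : -(1 / 2) ≤ T.corner t j := by
  obtain ⟨m, hm, -⟩ := (exists_corner_eq_of_treeLe (T.reaches t)).2 j
  rw [hm, T.corner_root]
  have := mul_nonneg (Nat.cast_nonneg m) (edge_pos t).le
  linarith

theorem corner_add_edge_le_half (t : T.Γ) (j : Fin (n - 1)) : T.corner t j + T.edge t ≤ 1 / 2 := by
  obtain ⟨-, -, hle⟩ := (exists_corner_eq_of_treeLe (T.reaches t)).2 j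
  rw [T.corner_root, edge_root] at hle
  linarith

theorem abs_corner_lt (t : T.Γ) (j : Fin (n - 1)) : |T.corner t j| < 3 / 2 := by
  have := neg_half_le_corner t j
  have := corner_add_edge_le_half t j
  have := edge_pos t
  rw [abs_lt]
  constructor <;> linarith

theorem exists_height_eq_nat_mul_edge (t : T.Γ) : ∃ m : ℕ, T.height t = m * T.edge t := by
  induction t using WhitneyTree.induction with
  | hroot => exact ⟨0, by simp [T.height_root]⟩
  | hstep r hr ih =>
    obtain ⟨m, hm⟩ := ih
    refine ⟨(m + 1) * 2 ^ (T.lvl r - T.lvl (T.par r)), ?_⟩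
    rw [height_eq_of_ne_root hr, hm, edge_eq_two_pow_mul (lvl_par_le r)]
    push_cast
    ring

theorem height_nonneg (t : T.Γ) : 0 ≤ T.height t := by
  obtain ⟨m, hm⟩ := exists_height_eq_nat_mul_edge t
  rw [hm]
  exact mul_nonneg (Nat.cast_nonneg m) (edge_pos t).le

theorem height_add_edge_le (t : T.Γ) : T.height t + T.edge t ≤ φ (T.corner t) :=
  T.below_graph t _ fun _ => ⟨le_rfl, le_add_of_nonneg_right (edge_pos t).le⟩

theorem edge_mul_two_pow_lvl (t : T.Γ) : T.edge t * 2 ^ T.lvl t = 1 := by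
  rw [edge, ← zpow_natCast, ← zpow_add₀ two_ne_zero, neg_add_cancel, zpow_zero]

theorem exists_near_graph_of_not_fits {t : T.Γ} (ht : t ≠ T.a) (hfit : ¬ T.Fits (T.par t)) :
    ∃ x, (∀ j, |x j| < 3 / 2) ∧ dist x (T.corner t) ≤ 4 * T.edge t ∧
      φ x < T.height t + 4 * T.edge t := by
  obtain ⟨x, ⟨hx₁, hx₂lo, hx₂hi⟩, hxΩ⟩ := Set.not_subset.mp hfit
  have hedge := edge_par_of_not_fits ht hfit
  have hbox : ∀ j, |x.1 j| < 3 / 2 := by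
    intro j
    have := neg_half_le_corner (T.par t) j
    have := corner_add_edge_le_half (T.par t) j
    have := edge_le_one (T.par t)
    have := hx₁ j
    rw [abs_lt]
    constructor <;> linarith
  have hφx : φ x.1 ≤ x.2 :=
    not_lt.mp fun h => hxΩ ⟨hbox, (height_nonneg _).trans_lt hx₂lo, h⟩
  refine ⟨x.1, hbox, (dist_pi_le_iff (by linarith [edge_pos t])).2 fun j => ?_, ?_⟩
  · obtain ⟨m, hm, hle⟩ := exists_corner_eq_of_ne_root ht j
    have := mul_nonneg (Nat.cast_nonneg m) (edge_pos t).le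
    have := hx₁ j
    rw [Real.dist_eq, abs_le]
    constructor <;> linarith
  · rw [height_eq_of_ne_root ht]
    linarith

theorem exists_near_graph {r : T.Γ} (hr : 1 ≤ T.lvl r) :
    ∃ x, (∀ j, |x j| < 3 / 2) ∧ dist x (T.corner r) ≤ 4 * T.edge r ∧
      φ x < T.height r + 4 * T.edge r := by
  induction r using WhitneyTree.induction with
  | hroot => simp [T.lvl_root] at hr
  | hstep r hra ih =>
    by_cases hfit : T.Fits (T.par r)
    · obtain ⟨hl, hc, -⟩ := T.child_translate r hra hfit
      obtain ⟨x, hbox, hdist, hφx⟩ := ih (hl ▸ hr)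
      have he := edge_eq_of_lvl_eq hl
      refine ⟨x, hbox, by rwa [hc, he], ?_⟩
      rw [he, height_eq_of_ne_root hra]
      linarith [edge_pos (T.par r)]
    · exact exists_near_graph_of_not_fits hra hfit

theorem height_sub_le_of_corner_eq {α K : ℝ} (hα : 0 ≤ α) (hα1 : α ≤ 1) (hK : 0 ≤ K)
    (hφH : ∀ x y : Fin (n - 1) → ℝ, (∀ i, |x i| < 3 / 2) → (∀ i, |y i| < 3 / 2) →
      |φ x - φ y| ≤ K * dist x y ^ α)
    (hφub : ∀ x, φ x < 3) {r r' : T.Γ} (hl : T.lvl r = T.lvl r')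
    (hc : T.corner r = T.corner r') :
    T.height r' - T.height r ≤ (K * 4 ^ α + 3) * T.edge r ^ α := by
  have htop := height_add_edge_le r'
  rw [edge_eq_of_lvl_eq hl.symm, ← hc] at htop
  have hK4 : 0 ≤ K * 4 ^ α := mul_nonneg hK (Real.rpow_nonneg (by norm_num) α)
  rcases Nat.eq_zero_or_pos (T.lvl r) with h0 | hpos
  · rw [show T.edge r = 1 by simp [edge, h0], Real.one_rpow] at *
    linarith [height_nonneg r, hφub (T.corner r)]
  obtain ⟨x, hbox, hdist, hφx⟩ := exists_near_graph hpos
  have hHolder : φ (T.corner r) - φ x ≤ K * 4 ^ α * T.edge r ^ α :=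
    calc φ (T.corner r) - φ x ≤ |φ x - φ (T.corner r)| := by
          rw [abs_sub_comm]; exact le_abs_self _
      _ ≤ K * dist x (T.corner r) ^ α := hφH _ _ hbox (abs_corner_lt r)
      _ ≤ K * (4 * T.edge r) ^ α := by gcongr
      _ = K * 4 ^ α * T.edge r ^ α := by
          rw [Real.mul_rpow (by norm_num) (edge_pos r).le, mul_assoc]
  have hedge : T.edge r ≤ T.edge r ^ α :=
    Real.self_le_rpow_of_le_one (edge_pos r).le (edge_le_one r) hα1
  nlinarith

theorem shadow_finite_and_ncard_le {t : T.Γ} {i : ℕ} (hi : T.lvl t ≤ i) {D : ℝ}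
    (hD : ∀ r r', T.lvl r = i → T.lvl r' = i → T.corner r = T.corner r' →
      T.height r' - T.height r ≤ D) :
    {r | treeLe T.par t r ∧ T.lvl r = i}.Finite ∧
      {r | treeLe T.par t r ∧ T.lvl r = i}.ncard ≤
        (2 * ⌈D * 2 ^ i⌉₊ + 1) * 2 ^ ((i - T.lvl t) * (n - 1)) := by
  set S := {r | treeLe T.par t r ∧ T.lvl r = i}
  let col (r : T.Γ) (j : Fin (n - 1)) : ℕ := ⌊(T.corner r j - T.corner t j) / T.edge r⌋₊
  let hgt (r : T.Γ) : ℕ := ⌊T.height r / T.edge r⌋₊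
  have hcol : ∀ r ∈ S, ∀ j, T.corner r j = T.corner t j + col r j * T.edge r ∧
      col r j < 2 ^ (i - T.lvl t) := by
    rintro r ⟨htr, rfl⟩ j
    obtain ⟨m, hm, hcorner⟩ := exists_lt_two_pow_corner_eq htr j
    rw [show col r j = m from Nat.floor_div_eq_of_eq_mul (edge_pos r).ne' (by rw [hcorner]; ring)]
    exact ⟨hcorner, hm⟩
  have hhgt : ∀ r, T.height r = hgt r * T.edge r := fun r => by
    obtain ⟨m, hm⟩ := exists_height_eq_nat_mul_edge r
    rw [show hgt r = m from Nat.floor_div_eq_of_eq_mul (edge_pos r).ne' hm, hm]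
  have hcorner_eq : ∀ r ∈ S, ∀ r' ∈ S, col r = col r' → T.corner r = T.corner r' :=
    fun r hr r' hr' h => funext fun j => by
      rw [(hcol r hr j).1, (hcol r' hr' j).1, h, edge_eq_of_lvl_eq (hr.2.trans hr'.2.symm)]
  obtain ⟨hfin, hcard⟩ := Set.finite_and_ncard_le_of_injOn_of_fibers col (fun r => (hgt r : ℤ))
    (Fintype.piFinset fun _ => Finset.range (2 ^ (i - T.lvl t))) ⌈D * 2 ^ i⌉₊
    (fun r hr r' hr' h => by
      obtain ⟨hc, hh⟩ := Prod.ext_iff.mp h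
      refine T.cube_inj r r' (hr.2.trans hr'.2.symm) (hcorner_eq r hr r' hr' hc) ?_
      rw [hhgt r, hhgt r', edge_eq_of_lvl_eq (hr.2.trans hr'.2.symm)]
      exact_mod_cast congrArg (fun k : ℤ => (k : ℝ) * T.edge r') hh)
    (fun r hr => Fintype.mem_piFinset.2 fun j => Finset.mem_range.2 (hcol r hr j).2)
    (fun r hr r' hr' h => by
      have hgap := hD r r' hr.2 hr'.2 (hcorner_eq r hr r' hr' h)
      rw [hhgt r, hhgt r', edge_eq_of_lvl_eq (hr'.2.trans hr.2.symm)] at hgap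
      have : ((hgt r' : ℝ) - hgt r) ≤ D * 2 ^ i := by
        have := mul_le_mul_of_nonneg_right hgap (pow_nonneg zero_le_two i)
        have hei : T.edge r * 2 ^ i = 1 := hr.2 ▸ edge_mul_two_pow_lvl r
        rwa [← sub_mul, mul_assoc, hei, mul_one] at this
      have := this.trans (Nat.le_ceil _)
      exact_mod_cast (by linarith : (hgt r' : ℝ) ≤ hgt r + ⌈D * 2 ^ i⌉₊))
  refine ⟨hfin, hcard.trans_eq ?_⟩
  rw [Fintype.card_piFinset, Finset.prod_const, Finset.card_range, Finset.card_univ,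
    Fintype.card_fin, ← pow_mul]

end WhitneyTree

theorem two_mul_ceil_add_one_mul_le {M α : ℝ} (hM : 0 ≤ M) (hα1 : α ≤ 1) {n k i : ℕ}
    (hn : 1 ≤ n) (hki : k ≤ i) :
    ((2 * ⌈M * 2 ^ (-(i : ℝ) * α) * 2 ^ i⌉₊ + 1 : ℕ) : ℝ) * 2 ^ ((i - k) * (n - 1)) ≤
      (2 * M + 3) * 2 ^ (-(k : ℝ) * (n - 1)) * 2 ^ (-(i : ℝ) * (α - n)) := by
  set β : ℝ := 2 ^ ((i : ℝ) * (1 - α))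
  have hβ : 1 ≤ β := Real.one_le_rpow one_le_two (mul_nonneg i.cast_nonneg (by linarith))
  have hceil : (2 : ℝ) ^ (-(i : ℝ) * α) * 2 ^ i = β := by
    rw [← Real.rpow_natCast, ← Real.rpow_add two_pos]
    congr 1
    ring
  have hpow : (2 : ℝ) ^ (-(k : ℝ) * (n - 1)) * 2 ^ (-(i : ℝ) * (α - n)) =
      β * 2 ^ ((i - k) * (n - 1)) := by
    rw [← Real.rpow_natCast, ← Real.rpow_add two_pos, ← Real.rpow_add two_pos]
    push_cast [Nat.cast_sub hki, Nat.cast_sub hn]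
    congr 1
    ring
  have hP : (0 : ℝ) < 2 ^ ((i - k) * (n - 1)) := by positivity
  rw [mul_assoc (2 * M + 3), hpow, mul_assoc M, hceil]
  calc ((2 * ⌈M * β⌉₊ + 1 : ℕ) : ℝ) * 2 ^ ((i - k) * (n - 1))
      ≤ (2 * M * β + 3) * 2 ^ ((i - k) * (n - 1)) := by
        gcongr
        push_cast
        linarith [Nat.ceil_lt_add_one (mul_nonneg hM (zero_le_one.trans hβ))]
    _ ≤ (2 * M + 3) * (β * 2 ^ ((i - k) * (n - 1))) := by nlinarith

theorem stmt15_general (n : ℕ) (hn : 2 ≤ n) (α K : ℝ) (hα : 0 < α) (hα1 : α ≤ 1) (hK : 0 < K)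
    (φ : (Fin (n - 1) → ℝ) → ℝ)
    (hφH : ∀ x y : Fin (n - 1) → ℝ, (∀ i, |x i| < 3 / 2) → (∀ i, |y i| < 3 / 2) →
      |φ x - φ y| ≤ K * dist x y ^ α)
    (hφub : ∀ x, φ x < 3) :
    ∃ C : ℝ, 0 < C ∧
      ∀ (T : WhitneyTree n φ) (t : T.Γ) (k i : ℕ), T.lvl t = k → k ≤ i →
        {r : T.Γ | treeLe T.par t r ∧ T.lvl r = i}.Finite ∧
        (({r : T.Γ | treeLe T.par t r ∧ T.lvl r = i}.ncard : ℝ)) ≤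
          C * 2 ^ (-(k : ℝ) * (n - 1)) * 2 ^ (-(i : ℝ) * (α - n)) := by
  have hM : 0 ≤ K * 4 ^ α + 3 := by positivity
  refine ⟨2 * (K * 4 ^ α + 3) + 3, by positivity, fun T t k i hk hki => ?_⟩
  have hgap : ∀ r r' : T.Γ, T.lvl r = i → T.lvl r' = i → T.corner r = T.corner r' →
      T.height r' - T.height r ≤ (K * 4 ^ α + 3) * 2 ^ (-(i : ℝ) * α) := by
    intro r r' hr hr' hc
    have := WhitneyTree.height_sub_le_of_corner_eq hα.le hα1 hK.le hφH hφub (hr.trans hr'.symm) hc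
    rwa [WhitneyTree.edge_eq_rpow, ← Real.rpow_mul zero_le_two, hr] at this
  obtain ⟨hfin, hcard⟩ := WhitneyTree.shadow_finite_and_ncard_le (hk ▸ hki) hgap
  rw [hk] at hcard
  exact ⟨hfin, le_trans (by exact_mod_cast hcard)
    (two_mul_ceil_add_one_mul_le hM hα1 (by omega) hki)⟩

theorem stmt15 (n : ℕ) (hn : 2 ≤ n) (α K : ℝ) (hα : 0 < α) (hα1 : α ≤ 1) (hK : 0 < K)
    (φ : (Fin (n - 1) → ℝ) → ℝ)
    (hφH : ∀ x y : Fin (n - 1) → ℝ, (∀ i, |x i| < 3 / 2) → (∀ i, |y i| < 3 / 2) →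
      |φ x - φ y| ≤ K * dist x y ^ α)
    (hφlb : ∀ x, 2 ≤ φ x) (hφub : ∀ x, φ x < 3) :
    ∃ C : ℝ, 0 < C ∧
      ∀ (T : WhitneyTree n φ) (t : T.Γ) (k i : ℕ), T.lvl t = k → k ≤ i →
        {r : T.Γ | treeLe T.par t r ∧ T.lvl r = i}.Finite ∧
        (({r : T.Γ | treeLe T.par t r ∧ T.lvl r = i}.ncard : ℝ)) ≤
          C * 2 ^ (-(k : ℝ) * (n - 1)) * 2 ^ (-(i : ℝ) * (α - n)) :=
  stmt15_general n hn α K hα hα1 hK φ hφH hφub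
end
end
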